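/- Let 𝕊 be the collection of subsets of ℝ̂ consisting of all closed convex subsets of ℝ̂, all open intervals (x,y) with x, y ∈ ℝ and x < y, and the open interval (−∞, +∞) = ℝ. Let I be an ideal of M₂(ℝ̄). Then there exists I' ∈ 𝕊 such that for all X ∈ M₂(ℝ̄): X ∈ I if and only if PC(X) embeds isometrically into I'. Moreover, I' is unique up to isometry. -/

import Mathlib

open scoped Classical ENNReal

/-- The tropical semiring `ℝ̄ = ℝ ∪ {-∞}`, carried by `WithBot ℝ`;
tropical addition is `max` and tropical multiplication is `+`. -/
abbrev Rb : Type := WithBot ℝ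

/-- Tropical matrix multiplication. -/
noncomputable def tMul {n : ℕ} (A B : Fin n → Fin n → Rb) : Fin n → Fin n → Rb :=
  fun i j => Finset.univ.sup fun k => A i k + B k j

/-- The column space of a matrix: all tropical linear combinations of its columns. -/
def ColSpace {n : ℕ} (A : Fin n → Fin n → Rb) : Set (Fin n → Rb) :=
  {v | ∃ c : Fin n → Rb, ∀ i, v i = Finset.univ.sup fun j => c j + A i j}

/-- The row space of a matrix: all tropical linear combinations of its rows. -/
def RowSpace {n : ℕ} (A : Fin n → Fin n → Rb) : Set (Fin n → Rb) :=
  {v | ∃ c : Fin n → Rb, ∀ j, v j = Finset.univ.sup fun i => c i + A i j}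

abbrev Mat2 : Type := Fin 2 → Fin 2 → Rb

/-- Inclusion of `ℝ̄` into the projective line `ℝ̂ = ℝ ∪ {-∞, +∞}` (modelled by `EReal`). -/
noncomputable def toE : Rb → EReal := WithBot.recBotCoe ⊥ (fun r : ℝ => (r : EReal))

/-- Projection of a vector `(a, b)` to `b - a ∈ ℝ̂`. -/
noncomputable def projPt (v : Fin 2 → Rb) : EReal := toE (v 1) - toE (v 0)

def zeroVec : Fin 2 → Rb := fun _ => ⊥

/-- Projective column space. -/
noncomputable def PC (A : Mat2) : Set EReal :=
  {z | ∃ v ∈ ColSpace A, v ≠ zeroVec ∧ projPt v = z}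

/-- Projective row space. -/
noncomputable def PR (A : Mat2) : Set EReal :=
  {z | ∃ v ∈ RowSpace A, v ≠ zeroVec ∧ projPt v = z}

/-- The metric `δ` on `ℝ̂`. -/
noncomputable def delta (x y : EReal) : ℝ≥0∞ :=
  if (∃ a : ℝ, x = (a : EReal)) ∧ (∃ b : ℝ, y = (b : EReal)) then
    ENNReal.ofReal |x.toReal - y.toReal|
  else if x = y then 0 else ⊤

/-- `M` embeds isometrically into `N`. -/
def IsomEmbed (M N : Set EReal) : Prop :=
  ∃ f : EReal → EReal, Set.MapsTo f M N ∧ Set.InjOn f M ∧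
    ∀ x ∈ M, ∀ y ∈ M, delta (f x) (f y) = delta x y

/-- `M` and `N` are isometric. -/
def Isom (M N : Set EReal) : Prop :=
  ∃ f : EReal → EReal, Set.BijOn f M N ∧
    ∀ x ∈ M, ∀ y ∈ M, delta (f x) (f y) = delta x y

/-- Closed convex subsets of `ℝ̂`: the empty set, singletons and closed intervals. -/
def IsClosedConvex (S : Set EReal) : Prop :=
  S = ∅ ∨ ∃ x y : EReal, x ≤ y ∧ S = Set.Icc x y

/-- An ideal of the monoid of `2 × 2` tropical matrices. -/
noncomputable def IsIdeal (I : Set Mat2) : Prop :=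
  I.Nonempty ∧ ∀ A ∈ I, ∀ X Y : Mat2, tMul (tMul X A) Y ∈ I

/-- The collection `𝕊`: all closed convex subsets of `ℝ̂`, all finite open intervals with
real endpoints, and the open interval `(-∞, +∞)`. -/
def SS : Set (Set EReal) :=
  {S | IsClosedConvex S ∨ (∃ x y : ℝ, x < y ∧ S = Set.Ioo (x : EReal) (y : EReal)) ∨
    S = Set.Ioo (⊥ : EReal) ⊤}

/-!
The projective column space of a `2 × 2` tropical matrix is a closed interval of `ℝ̂` (the
tropical segment between the projective points of its columns), and every closed interval
occurs. If a motion `z ↦ ±z + c` maps `PC X` into `PC A`, then `X = D ⊗ A ⊗ Y` with `D`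
monomial; and a matrix whose projective column space is a point factors through any nonzero
matrix. So the predicate "every `X` with `PC X = [p, q]` lies in `I`" is closed under these
moves. Any such family of intervals is pinned down by three invariants: whether it contains
`[-∞, +∞]`, whether it contains a ray, and its down-set of lengths `ℓ` with `[0, ℓ]` in the
family. These invariants single out a representative `[-∞, +∞]`, `[-∞, 0]`, `ℝ`, `[0, L]` or
`(0, L)` in `𝕊`; conversely every member of `𝕊` is isometric to one of these normal forms, which
has the same invariants, and this gives uniqueness.
-/

open Set

/-! ### Isometries of `ℝ̂` -/

lemma delta_coe_coe (a b : ℝ) : delta a b = ENNReal.ofReal |a - b| := by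
  simp [delta]

lemma delta_self (x : EReal) : delta x x = 0 := by
  induction x using EReal.rec <;> simp [delta]

lemma delta_eq_top {x y : EReal} (hne : x ≠ y)
    (h : ¬((∃ a : ℝ, x = a) ∧ ∃ b : ℝ, y = b)) : delta x y = ⊤ := by
  simp only [delta, if_neg h, if_neg hne]

lemma delta_coe_coe_ne_top (a b : ℝ) : delta a b ≠ ⊤ := by
  simp [delta_coe_coe]

lemma exists_coe_of_delta_ne_top {x y : EReal} (hne : x ≠ y) (h : delta x y ≠ ⊤) :
    (∃ a : ℝ, x = a) ∧ ∃ b : ℝ, y = b :=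
  not_not.1 fun h' => h (delta_eq_top hne h')

lemma delta_eq_zero_iff {x y : EReal} : delta x y = 0 ↔ x = y := by
  refine ⟨fun h => ?_, fun h => h ▸ delta_self x⟩
  by_contra hne
  obtain ⟨⟨a, rfl⟩, ⟨b, rfl⟩⟩ := exists_coe_of_delta_ne_top hne (by simp [h])
  rw [delta_coe_coe, ENNReal.ofReal_eq_zero, abs_nonpos_iff, sub_eq_zero] at h
  exact hne (congrArg _ h)

lemma delta_add_coe (x y : EReal) (c : ℝ) : delta (x + c) (y + c) = delta x y := by
  induction x using EReal.rec <;> induction y using EReal.rec <;>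
    simp [delta, ← EReal.coe_add]

lemma delta_neg (x y : EReal) : delta (-x) (-y) = delta x y := by
  induction x using EReal.rec <;> induction y using EReal.rec <;>
    simp [delta, ← EReal.coe_neg]
  rw [← abs_neg]; ring_nf

lemma delta_le_of_mem_Icc {x y : ℝ} {a b : EReal} (ha : a ∈ Icc (x : EReal) y)
    (hb : b ∈ Icc (x : EReal) y) : delta a b ≤ ENNReal.ofReal (y - x) := by
  induction a using EReal.rec <;> induction b using EReal.rec <;> simp_all [delta_coe_coe]
  exact ENNReal.ofReal_le_ofReal (abs_sub_le_iff.2 ⟨by linarith, by linarith⟩)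

lemma delta_lt_of_mem_Ioo {x y : ℝ} {a b : EReal} (ha : a ∈ Ioo (x : EReal) y)
    (hb : b ∈ Ioo (x : EReal) y) : delta a b < ENNReal.ofReal (y - x) := by
  induction a using EReal.rec <;> induction b using EReal.rec <;> simp_all [delta_coe_coe]
  exact (ENNReal.ofReal_lt_ofReal_iff (by linarith)).2
    (abs_sub_lt_iff.2 ⟨by linarith, by linarith⟩)

lemma exists_coe_of_mem_Ioo_bot_top {z : EReal} (hz : z ∈ Ioo ⊥ ⊤) : ∃ r : ℝ, z = r :=
  ⟨z.toReal, (EReal.coe_toReal hz.2.ne hz.1.ne').symm⟩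

lemma eq_bot_or_eq_bot_of_delta_eq_top {x y : EReal} (hx : x ≠ ⊤) (hy : y ≠ ⊤)
    (h : delta x y = ⊤) : x = ⊥ ∨ y = ⊥ := by
  by_contra! hxy
  rw [← EReal.coe_toReal hx hxy.1, ← EReal.coe_toReal hy hxy.2] at h
  exact delta_coe_coe_ne_top _ _ h

def IsMotion (g : EReal → EReal) : Prop :=
  ∃ c : ℝ, (g = fun z : EReal => z + c) ∨ g = fun z : EReal => -z + c

lemma isMotion_id : IsMotion id := ⟨0, Or.inl (funext fun z => by simp)⟩

lemma IsMotion.delta_eq {g : EReal → EReal} (hg : IsMotion g) (x y : EReal) :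
    delta (g x) (g y) = delta x y := by
  obtain ⟨c, rfl | rfl⟩ := hg
  · exact delta_add_coe x y c
  · exact (delta_add_coe _ _ c).trans (delta_neg x y)

lemma IsomEmbed.of_isMotion {M N : Set EReal} {g : EReal → EReal} (hg : IsMotion g)
    (h : MapsTo g M N) : IsomEmbed M N :=
  ⟨g, h, fun x _ y _ hxy => delta_eq_zero_iff.1 (by rw [← hg.delta_eq, hxy, delta_self]),
    fun x _ y _ => hg.delta_eq x y⟩

lemma IsomEmbed.of_subset {M N : Set EReal} (h : M ⊆ N) : IsomEmbed M N :=
  .of_isMotion isMotion_id h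

lemma IsomEmbed.trans {L M N : Set EReal} (h₁ : IsomEmbed L M) (h₂ : IsomEmbed M N) :
    IsomEmbed L N := by
  obtain ⟨f, hfm, hfi, hfd⟩ := h₁
  obtain ⟨g, hgm, hgi, hgd⟩ := h₂
  exact ⟨g ∘ f, hgm.comp hfm, hgi.comp hfi hfm,
    fun x hx y hy => (hgd _ (hfm hx) _ (hfm hy)).trans (hfd x hx y hy)⟩

lemma IsomEmbed.exists_delta_eq {M N : Set EReal} (h : IsomEmbed M N) {a b : EReal}
    (ha : a ∈ M) (hb : b ∈ M) : ∃ a' ∈ N, ∃ b' ∈ N, delta a' b' = delta a b := by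
  obtain ⟨f, hf, -, hd⟩ := h
  exact ⟨f a, hf ha, f b, hf hb, hd a ha b hb⟩

lemma isomEmbed_singleton {N : Set EReal} (hN : N.Nonempty) (p : EReal) : IsomEmbed {p} N := by
  obtain ⟨b, hb⟩ := hN
  refine ⟨fun _ => b, fun _ _ => hb, fun x hx y hy _ => hx.trans hy.symm, fun x hx y hy => ?_⟩
  rw [eq_of_mem_singleton hx, eq_of_mem_singleton hy, delta_self, delta_self]

lemma Isom.refl (S : Set EReal) : Isom S S := ⟨id, bijOn_id S, fun _ _ _ _ => rfl⟩

lemma Isom.isomEmbed {M N : Set EReal} (h : Isom M N) : IsomEmbed M N :=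
  let ⟨f, hf, hd⟩ := h; ⟨f, hf.mapsTo, hf.injOn, hd⟩

lemma Isom.symm {M N : Set EReal} (h : Isom M N) : Isom N M := by
  obtain ⟨f, hf, hd⟩ := h
  have hinv := hf.invOn_invFunOn
  refine ⟨_, hf.symm hinv.symm, fun x hx y hy => ?_⟩
  have hM := (hf.symm hinv.symm).mapsTo
  rw [← hd _ (hM hx) _ (hM hy), hinv.2 hx, hinv.2 hy]

lemma Isom.of_isMotion {M N : Set EReal} {g g' : EReal → EReal} (hg : IsMotion g)
    (hgg' : ∀ z, g (g' z) = z) (hg'g : ∀ z, g' (g z) = z) (h : MapsTo g M N)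
    (h' : MapsTo g' N M) : Isom M N :=
  ⟨g, InvOn.bijOn ⟨fun z _ => hg'g z, fun z _ => hgg' z⟩ h h', fun x _ y _ => hg.delta_eq x y⟩

lemma isom_singleton (a b : EReal) : Isom {a} {b} :=
  ⟨fun _ => b, ⟨fun _ _ => rfl, fun x hx y hy _ => hx.trans hy.symm,
    fun _ hz => ⟨a, rfl, hz.symm⟩⟩, fun x hx y hy => by
      rw [eq_of_mem_singleton hx, eq_of_mem_singleton hy, delta_self, delta_self]⟩

lemma add_coe_add_coe_neg (z : EReal) (c : ℝ) : z + c + ((-c : ℝ) : EReal) = z := by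
  rw [EReal.coe_neg, ← sub_eq_add_neg, EReal.add_sub_cancel_right]

lemma neg_neg_add_coe_add_coe (z : EReal) (c : ℝ) : -(-z + c) + c = z := by
  induction z using EReal.rec <;> simp [← EReal.coe_neg, ← EReal.coe_add]

lemma mapsTo_add_Icc {p q u v : EReal} {c : ℝ} (hu : u ≤ p + c) (hv : q + c ≤ v) :
    MapsTo (fun z : EReal => z + c) (Icc p q) (Icc u v) :=
  fun _ hz => ⟨hu.trans (add_le_add hz.1 le_rfl), (add_le_add hz.2 le_rfl).trans hv⟩

lemma mapsTo_neg_add_Icc {p q u v : EReal} {c : ℝ} (hu : u ≤ -q + c) (hv : -p + c ≤ v) :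
    MapsTo (fun z : EReal => -z + c) (Icc p q) (Icc u v) :=
  fun _ hz => ⟨hu.trans (add_le_add (EReal.neg_le_neg_iff.2 hz.2) le_rfl),
    (add_le_add (EReal.neg_le_neg_iff.2 hz.1) le_rfl).trans hv⟩

lemma add_coe_neg_add_coe (z : EReal) (c : ℝ) : z + ((-c : ℝ) : EReal) + c = z := by
  rw [EReal.coe_neg, ← sub_eq_add_neg, EReal.sub_add_cancel]

lemma isom_add_Icc {p q u v : EReal} (c : ℝ) (hu : p + c = u) (hv : q + c = v) :
    Isom (Icc p q) (Icc u v) :=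
  .of_isMotion ⟨c, Or.inl rfl⟩ (add_coe_neg_add_coe · c) (add_coe_add_coe_neg · c)
    (mapsTo_add_Icc hu.ge hv.le) (mapsTo_add_Icc (p := u) (q := v)
      (by rw [← hu, add_coe_add_coe_neg]) (by rw [← hv, add_coe_add_coe_neg]))

lemma isom_add_Ioo {p q u v : EReal} (c : ℝ) (hu : p + c = u) (hv : q + c = v) :
    Isom (Ioo p q) (Ioo u v) :=
  .of_isMotion ⟨c, Or.inl rfl⟩ (add_coe_neg_add_coe · c) (add_coe_add_coe_neg · c)
    (fun z hz => ⟨hu ▸ EReal.add_lt_add_right_coe hz.1 c, hv ▸ EReal.add_lt_add_right_coe hz.2 c⟩)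
    fun z hz => ⟨by rw [← add_coe_add_coe_neg p c, hu]; exact EReal.add_lt_add_right_coe hz.1 _,
      by rw [← add_coe_add_coe_neg q c, hv]; exact EReal.add_lt_add_right_coe hz.2 _⟩

lemma isom_neg_add_Icc {p q u v : EReal} (c : ℝ) (hu : -q + c = u) (hv : -p + c = v) :
    Isom (Icc p q) (Icc u v) :=
  .of_isMotion ⟨c, Or.inr rfl⟩ (neg_neg_add_coe_add_coe · c) (neg_neg_add_coe_add_coe · c)
    (mapsTo_neg_add_Icc hu.ge hv.le) (mapsTo_neg_add_Icc (p := u) (q := v)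
      (by rw [← hv, neg_neg_add_coe_add_coe]) (by rw [← hu, neg_neg_add_coe_add_coe]))

/-! ### Families of closed intervals and their normal forms in `𝕊` -/

def embedsInto (S : Set EReal) (p q : EReal) : Prop := IsomEmbed (Icc p q) S

lemma Isom.embedsInto_eq {S T : Set EReal} (h : Isom S T) : embedsInto S = embedsInto T :=
  funext₂ fun _ _ => propext ⟨fun h' => h'.trans h.isomEmbed, fun h' => h'.trans h.symm.isomEmbed⟩

/-- `P p q` stands for "`Icc p q` belongs to the family"; for `q < p` this is the empty set. -/
structure IsIntervalDownset (P : EReal → EReal → Prop) : Prop where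
  of_lt : ∀ {p q : EReal}, q < p → P p q
  singleton : ∀ {u v : EReal} (p : EReal), u ≤ v → P u v → P p p
  of_mapsTo : ∀ {p q u v : EReal} {g : EReal → EReal}, IsMotion g →
    MapsTo g (Icc p q) (Icc u v) → P u v → P p q

lemma isIntervalDownset_embedsInto (S : Set EReal) : IsIntervalDownset (embedsInto S) where
  of_lt h := by
    rw [embedsInto, Icc_eq_empty (not_le.2 h)]
    exact .of_subset (empty_subset S)
  singleton p huv h := by
    obtain ⟨f, hf, -⟩ := h
    rw [embedsInto, Icc_self]
    exact isomEmbed_singleton ⟨_, hf (left_mem_Icc.2 huv)⟩ p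
  of_mapsTo hg hmaps h := (IsomEmbed.of_isMotion hg hmaps).trans h

def lengths (P : EReal → EReal → Prop) : Set ℝ := {ℓ | P 0 ℓ}

lemma exists_add_coe_le_zero {z : EReal} (hz : z ≠ ⊤) : ∃ c : ℝ, z + c ≤ 0 := by
  induction z using EReal.rec with
  | bot => exact ⟨0, by simp⟩
  | coe r => exact ⟨-r, by rw [← EReal.coe_add, add_neg_cancel, EReal.coe_zero]⟩
  | top => exact absurd rfl hz

namespace IsIntervalDownset

variable {P : EReal → EReal → Prop}

lemma of_translate (hP : IsIntervalDownset P) {p q u v : EReal} (c : ℝ) (hu : u ≤ p + c)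
    (hv : q + c ≤ v) (h : P u v) : P p q :=
  hP.of_mapsTo ⟨c, Or.inl rfl⟩ (mapsTo_add_Icc hu hv) h

lemma of_reflect (hP : IsIntervalDownset P) {p q u v : EReal} (c : ℝ) (hu : u ≤ -q + c)
    (hv : -p + c ≤ v) (h : P u v) : P p q :=
  hP.of_mapsTo ⟨c, Or.inr rfl⟩ (mapsTo_neg_add_Icc hu hv) h

lemma of_bot_top (hP : IsIntervalDownset P) (h : P ⊥ ⊤) (p q : EReal) : P p q :=
  hP.of_translate 0 bot_le le_top h

lemma of_ray (hP : IsIntervalDownset P) (h : P ⊥ 0) {p q : EReal} (hpq : ¬(p = ⊥ ∧ q = ⊤)) :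
    P p q := by
  by_cases hq : q = ⊤
  · obtain ⟨c, hc⟩ := exists_add_coe_le_zero (z := -p) (by simpa using fun hp => hpq ⟨hp, hq⟩)
    exact hP.of_reflect c bot_le hc h
  · obtain ⟨c, hc⟩ := exists_add_coe_le_zero hq
    exact hP.of_translate c bot_le hc h

lemma ray_of_lt (hP : IsIntervalDownset P) {p q : EReal} (hpq : p < q) (hinf : p = ⊥ ∨ q = ⊤)
    (h : P p q) : P ⊥ 0 := by
  obtain ⟨r, hpr, hrq⟩ := EReal.lt_iff_exists_real_btwn.1 hpq
  rcases hinf with rfl | rfl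
  · exact hP.of_translate r le_rfl (by simpa using hrq.le) h
  · exact hP.of_reflect r (by simpa using hpr.le) le_top h

lemma exists_coe_of_lt (hP : IsIntervalDownset P) (hray : ¬P ⊥ 0) {p q : EReal} (hpq : p < q)
    (h : P p q) : ∃ a b : ℝ, p = a ∧ q = b := by
  induction p using EReal.rec with
  | bot => exact absurd (hP.ray_of_lt hpq (Or.inl rfl) h) hray
  | top => exact absurd hpq not_top_lt
  | coe a =>
    induction q using EReal.rec with
    | bot => exact absurd hpq not_lt_bot
    | top => exact absurd (hP.ray_of_lt hpq (Or.inr rfl) h) hray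
    | coe b => exact ⟨a, b, rfl, rfl⟩

lemma coe_iff (hP : IsIntervalDownset P) (a b : ℝ) : P a b ↔ b - a ∈ lengths P := by
  refine ⟨hP.of_translate a (by simp) (by rw [← EReal.coe_add, sub_add_cancel]),
    hP.of_translate (-a) (by rw [← EReal.coe_add, add_neg_cancel, EReal.coe_zero]) ?_⟩
  rw [← EReal.coe_add, ← sub_eq_add_neg]

lemma singleton_iff (hP : IsIntervalDownset P) (p : EReal) : P p p ↔ 0 ∈ lengths P := by
  simp only [lengths, mem_ofPred_eq, EReal.coe_zero]
  exact ⟨hP.singleton 0 le_rfl, hP.singleton p le_rfl⟩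

theorem apply_iff (hP : IsIntervalDownset P) (p q : EReal) :
    P p q ↔ q < p ∨ P ⊥ ⊤ ∨ (P ⊥ 0 ∧ ¬(p = ⊥ ∧ q = ⊤)) ∨ (p = q ∧ 0 ∈ lengths P) ∨
      ∃ a b : ℝ, p = a ∧ q = b ∧ b - a ∈ lengths P := by
  refine ⟨fun h => ?_, ?_⟩
  · rcases lt_trichotomy q p with hqp | rfl | hpq
    · exact Or.inl hqp
    · exact Or.inr <| Or.inr <| Or.inr <| Or.inl ⟨rfl, (hP.singleton_iff q).1 h⟩
    by_cases hray : P ⊥ 0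
    · by_cases hfull : p = ⊥ ∧ q = ⊤
      · obtain ⟨rfl, rfl⟩ := hfull
        exact Or.inr (Or.inl h)
      · exact Or.inr <| Or.inr <| Or.inl ⟨hray, hfull⟩
    · obtain ⟨a, b, rfl, rfl⟩ := hP.exists_coe_of_lt hray hpq h
      exact Or.inr <| Or.inr <| Or.inr <| Or.inr ⟨a, b, rfl, rfl, (hP.coe_iff a b).1 h⟩
  · rintro (h | h | ⟨h, hpq⟩ | ⟨rfl, h⟩ | ⟨a, b, rfl, rfl, h⟩)
    · exact hP.of_lt h
    · exact hP.of_bot_top h p q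
    · exact hP.of_ray h hpq
    · exact (hP.singleton_iff p).2 h
    · exact (hP.coe_iff a b).2 h

theorem ext {Q : EReal → EReal → Prop} (hP : IsIntervalDownset P) (hQ : IsIntervalDownset Q)
    (hfull : P ⊥ ⊤ ↔ Q ⊥ ⊤) (hray : P ⊥ 0 ↔ Q ⊥ 0) (hlen : lengths P = lengths Q) : P = Q :=
  funext₂ fun p q => propext <| by rw [hP.apply_iff, hQ.apply_iff, hfull, hray, hlen]

lemma isLowerSet_lengths (hP : IsIntervalDownset P) : IsLowerSet (lengths P) :=
  fun _ _ hle h => hP.of_translate 0 (by simp) (by simpa using hle) h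

lemma Iio_subset_lengths (hP : IsIntervalDownset P) : Iio 0 ⊆ lengths P :=
  fun _ h => hP.of_lt (by exact_mod_cast h)

lemma lengths_eq_univ (hP : IsIntervalDownset P) (h : P ⊥ 0) : lengths P = univ :=
  eq_univ_of_forall fun _ => hP.of_ray h (by simp)

end IsIntervalDownset

lemma not_embedsInto_bot {N : Set EReal} (hN : N ⊆ Ioo ⊥ ⊤) {q : EReal} (hq : ⊥ < q) :
    ¬embedsInto N ⊥ q := fun h => by
  obtain ⟨a, ha, b, hb, hab⟩ := IsomEmbed.exists_delta_eq h (left_mem_Icc.2 hq.le)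
    (right_mem_Icc.2 hq.le)
  obtain ⟨a, rfl⟩ := exists_coe_of_mem_Ioo_bot_top (hN ha)
  obtain ⟨b, rfl⟩ := exists_coe_of_mem_Ioo_bot_top (hN hb)
  refine delta_coe_coe_ne_top a b (hab.trans (delta_eq_top hq.ne ?_))
  rintro ⟨⟨r, hr⟩, -⟩
  exact EReal.bot_ne_coe r hr

/-- `⊥, 0, ⊤` are pairwise at distance `⊤`, while a ray contains only one non-real point. -/
lemma not_embedsInto_Icc_bot_zero : ¬embedsInto (Icc ⊥ 0) ⊥ ⊤ := fun ⟨f, hf, _, hd⟩ => by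
  have hmem : ∀ z, z ∈ Icc (⊥ : EReal) ⊤ := fun z => ⟨bot_le, le_top⟩
  have hne : ∀ z, f z ≠ ⊤ := fun z h => by simpa [h] using (hf (hmem z)).2
  have key : ∀ x y : EReal, x ≠ y → ¬((∃ a : ℝ, x = a) ∧ ∃ b : ℝ, y = b) →
      (f x = ⊥ ∨ f y = ⊥) ∧ ¬(f x = ⊥ ∧ f y = ⊥) := fun x y hxy hr => by
    have hδ := (hd x (hmem x) y (hmem y)).trans (delta_eq_top hxy hr)
    refine ⟨eq_bot_or_eq_bot_of_delta_eq_top (hne x) (hne y) hδ, fun ⟨hx, hy⟩ => ?_⟩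
    rw [hx, hy, delta_self] at hδ
    exact ENNReal.zero_ne_top hδ
  have h₁ := key ⊥ 0 (by simp) (by simp)
  have h₂ := key 0 ⊤ (by simp) (by simp)
  have h₃ := key ⊥ ⊤ (by simp) (by simp)
  tauto

lemma Icc_zero_coe_subset_Ioo_bot_top {L : ℝ} : Icc (0 : EReal) L ⊆ Ioo ⊥ ⊤ :=
  fun _ hz => ⟨EReal.bot_lt_zero.trans_le hz.1, hz.2.trans_lt (EReal.coe_lt_top L)⟩

lemma lengths_embedsInto_Ioo_bot_top : lengths (embedsInto (Ioo ⊥ ⊤)) = univ :=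
  eq_univ_of_forall fun _ => .of_subset Icc_zero_coe_subset_Ioo_bot_top

lemma lengths_embedsInto_Icc {L : ℝ} (hL : 0 ≤ L) : lengths (embedsInto (Icc 0 L)) = Iic L := by
  ext ℓ
  refine ⟨fun h => ?_, fun h => .of_subset (Icc_subset_Icc le_rfl (EReal.coe_le_coe_iff.2 h))⟩
  rcases lt_or_ge ℓ 0 with hℓ | hℓ
  · exact (hℓ.trans_le hL).le
  change IsomEmbed (Icc ((0 : ℝ) : EReal) ℓ) (Icc ((0 : ℝ) : EReal) L) at h
  obtain ⟨a, ha, b, hb, hab⟩ := h.exists_delta_eq (left_mem_Icc.2 (EReal.coe_le_coe_iff.2 hℓ))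
    (right_mem_Icc.2 (EReal.coe_le_coe_iff.2 hℓ))
  have := hab ▸ delta_le_of_mem_Icc ha hb
  rwa [delta_coe_coe, ENNReal.ofReal_le_ofReal_iff (by linarith), zero_sub, abs_neg,
    abs_of_nonneg hℓ, sub_zero] at this

lemma lengths_embedsInto_Ioo {L : ℝ} (hL : 0 ≤ L) : lengths (embedsInto (Ioo 0 L)) = Iio L := by
  ext ℓ
  rcases lt_or_ge ℓ 0 with hℓ | hℓ
  · exact iff_of_true ((isIntervalDownset_embedsInto _).Iio_subset_lengths hℓ) (hℓ.trans_le hL)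
  refine ⟨fun h => ?_, fun h => ?_⟩
  · change IsomEmbed (Icc ((0 : ℝ) : EReal) ℓ) (Ioo ((0 : ℝ) : EReal) L) at h
    obtain ⟨a, ha, b, hb, hab⟩ := h.exists_delta_eq (left_mem_Icc.2 (EReal.coe_le_coe_iff.2 hℓ))
      (right_mem_Icc.2 (EReal.coe_le_coe_iff.2 hℓ))
    have := hab ▸ delta_lt_of_mem_Ioo ha hb
    rw [delta_coe_coe, ENNReal.ofReal_lt_ofReal_iff', zero_sub, abs_neg, abs_of_nonneg hℓ,
      sub_zero] at this
    exact this.1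
  · rw [mem_Iio] at h
    refine (IsomEmbed.of_isMotion ⟨(L - ℓ) / 2, Or.inl rfl⟩ (mapsTo_add_Icc le_rfl le_rfl)).trans
      (.of_subset (Icc_subset_Ioo ?_ ?_))
    · rw [zero_add]; exact EReal.coe_lt_coe_iff.2 (by linarith)
    · rw [← EReal.coe_add]; exact EReal.coe_lt_coe_iff.2 (by linarith)

noncomputable def canonical (P : EReal → EReal → Prop) : Set EReal :=
  if P ⊥ ⊤ then Icc ⊥ ⊤
  else if P ⊥ 0 then Icc ⊥ 0
  else if BddAbove (lengths P) then
    if sSup (lengths P) ∈ lengths P then Icc 0 (sSup (lengths P) : ℝ)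
    else Ioo 0 (sSup (lengths P) : ℝ)
  else Ioo ⊥ ⊤

lemma Icc_mem_SS (a b : EReal) : Icc a b ∈ SS := by
  rcases le_or_gt a b with h | h
  · exact Or.inl (Or.inr ⟨a, b, h, rfl⟩)
  · exact Or.inl (Or.inl (Icc_eq_empty (not_le.2 h)))

lemma Ioo_zero_coe_mem_SS (L : ℝ) : Ioo 0 (L : EReal) ∈ SS := by
  rcases lt_or_ge 0 L with h | h
  · exact Or.inr (Or.inl ⟨0, L, h, by rw [EReal.coe_zero]⟩)
  · exact Or.inl (Or.inl (Ioo_eq_empty (not_lt.2 (by exact_mod_cast h))))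

lemma canonical_mem_SS (P : EReal → EReal → Prop) : canonical P ∈ SS := by
  unfold canonical
  split_ifs
  · exact Icc_mem_SS _ _
  · exact Icc_mem_SS _ _
  · exact Icc_mem_SS _ _
  · exact Ioo_zero_coe_mem_SS _
  · exact Or.inr (Or.inr rfl)

lemma canonical_embedsInto_Icc_bot_top : canonical (embedsInto (Icc ⊥ ⊤)) = Icc ⊥ ⊤ :=
  if_pos (.of_subset subset_rfl)

lemma canonical_embedsInto_Icc_bot_zero : canonical (embedsInto (Icc ⊥ 0)) = Icc ⊥ 0 := by
  rw [canonical, if_neg not_embedsInto_Icc_bot_zero, if_pos (.of_subset subset_rfl)]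

lemma canonical_embedsInto_Ioo_bot_top : canonical (embedsInto (Ioo ⊥ ⊤)) = Ioo ⊥ ⊤ := by
  rw [canonical, if_neg (not_embedsInto_bot subset_rfl bot_lt_top),
    if_neg (not_embedsInto_bot subset_rfl EReal.bot_lt_zero), lengths_embedsInto_Ioo_bot_top,
    if_neg not_bddAbove_univ]

lemma canonical_embedsInto_Icc {L : ℝ} (hL : 0 ≤ L) :
    canonical (embedsInto (Icc 0 L)) = Icc (0 : EReal) L := by
  have hN := Icc_zero_coe_subset_Ioo_bot_top (L := L)
  rw [canonical, if_neg (not_embedsInto_bot hN bot_lt_top),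
    if_neg (not_embedsInto_bot hN EReal.bot_lt_zero), lengths_embedsInto_Icc hL,
    if_pos bddAbove_Iic, csSup_Iic, if_pos self_mem_Iic]

lemma canonical_embedsInto_Ioo {L : ℝ} (hL : 0 ≤ L) :
    canonical (embedsInto (Ioo 0 L)) = Ioo (0 : EReal) L := by
  have hN : Ioo (0 : EReal) L ⊆ Ioo ⊥ ⊤ := Ioo_subset_Ioo bot_le le_top
  rw [canonical, if_neg (not_embedsInto_bot hN bot_lt_top),
    if_neg (not_embedsInto_bot hN EReal.bot_lt_zero), lengths_embedsInto_Ioo hL,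
    if_pos bddAbove_Iio, csSup_Iio, if_neg self_notMem_Iio]

namespace IsIntervalDownset

variable {P : EReal → EReal → Prop}

lemma eq_embedsInto (hP : IsIntervalDownset P) {N : Set EReal} (hN : N ⊆ Ioo ⊥ ⊤)
    (hray : ¬P ⊥ 0) (hlen : lengths P = lengths (embedsInto N)) : P = embedsInto N :=
  hP.ext (isIntervalDownset_embedsInto N)
    (iff_of_false (fun h => hray (hP.of_bot_top h _ _)) (not_embedsInto_bot hN bot_lt_top))
    (iff_of_false hray (not_embedsInto_bot hN EReal.bot_lt_zero)) hlen

theorem embedsInto_canonical (hP : IsIntervalDownset P) : embedsInto (canonical P) = P := by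
  have hE := isIntervalDownset_embedsInto
  have hne : (lengths P).Nonempty := ⟨-1, hP.Iio_subset_lengths (by norm_num)⟩
  unfold canonical
  split_ifs with hfull hray hbdd hmem
  · exact funext₂ fun p q => propext <| iff_of_true (.of_subset (by simp)) (hP.of_bot_top hfull p q)
  · refine (hE _).ext hP (iff_of_false not_embedsInto_Icc_bot_zero hfull)
      (iff_of_true (.of_subset subset_rfl) hray) ?_
    rw [(hE _).lengths_eq_univ (.of_subset subset_rfl), hP.lengths_eq_univ hray]
  all_goals symm
  · have h0 : 0 ≤ sSup (lengths P) :=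
      csSup_Iio (a := (0 : ℝ)) ▸ csSup_le_csSup hbdd nonempty_Iio hP.Iio_subset_lengths
    refine hP.eq_embedsInto Icc_zero_coe_subset_Ioo_bot_top hray ?_
    rw [lengths_embedsInto_Icc h0]
    exact Subset.antisymm (fun _ h => le_csSup hbdd h) fun _ h => hP.isLowerSet_lengths h hmem
  · have h0 : 0 ≤ sSup (lengths P) :=
      csSup_Iio (a := (0 : ℝ)) ▸ csSup_le_csSup hbdd nonempty_Iio hP.Iio_subset_lengths
    refine hP.eq_embedsInto (Ioo_subset_Ioo bot_le le_top) hray ?_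
    rw [lengths_embedsInto_Ioo h0]
    refine Subset.antisymm (fun ℓ h => (le_csSup hbdd h).lt_of_ne fun e => hmem (e ▸ h))
      fun ℓ h => ?_
    obtain ⟨m, hm, hlt⟩ := exists_lt_of_lt_csSup hne h
    exact hP.isLowerSet_lengths hlt.le hm
  · refine hP.eq_embedsInto subset_rfl hray ?_
    rw [lengths_embedsInto_Ioo_bot_top]
    refine eq_univ_of_forall fun ℓ => ?_
    obtain ⟨m, hm, hlt⟩ := not_bddAbove_iff.1 hbdd ℓ
    exact hP.isLowerSet_lengths hlt.le hm

end IsIntervalDownset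

lemma exists_isom_of_mem_SS {S : Set EReal} (hS : S ∈ SS) :
    ∃ s, canonical (embedsInto s) = s ∧ Isom s S := by
  rcases hS with (rfl | ⟨x, y, hxy, rfl⟩) | ⟨x, y, hxy, rfl⟩ | rfl
  · refine ⟨_, canonical_embedsInto_Ioo le_rfl, ?_⟩
    rw [EReal.coe_zero, Ioo_self]
    exact .refl ∅
  · rcases hxy.eq_or_lt with rfl | hlt
    · refine ⟨_, canonical_embedsInto_Icc le_rfl, ?_⟩
      rw [EReal.coe_zero, Icc_self, Icc_self]
      exact isom_singleton 0 x
    induction x using EReal.rec with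
    | top => exact absurd hlt not_top_lt
    | bot =>
      induction y using EReal.rec with
      | bot => exact absurd hlt (lt_irrefl _)
      | coe y => exact ⟨_, canonical_embedsInto_Icc_bot_zero, isom_add_Icc y (by simp) (by simp)⟩
      | top => exact ⟨_, canonical_embedsInto_Icc_bot_top, .refl _⟩
    | coe x =>
      induction y using EReal.rec with
      | bot => exact absurd hlt not_lt_bot
      | coe y =>
        refine ⟨_, canonical_embedsInto_Icc (sub_nonneg.2 (EReal.coe_lt_coe_iff.1 hlt).le),
          isom_add_Icc x (by simp) ?_⟩
        rw [← EReal.coe_add, sub_add_cancel]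
      | top => exact ⟨_, canonical_embedsInto_Icc_bot_zero, isom_neg_add_Icc x (by simp) (by simp)⟩
  · refine ⟨_, canonical_embedsInto_Ioo (sub_nonneg.2 hxy.le), isom_add_Ioo x (by simp) ?_⟩
    rw [← EReal.coe_add, sub_add_cancel]
  · exact ⟨_, canonical_embedsInto_Ioo_bot_top, .refl _⟩

theorem isom_canonical_embedsInto {S : Set EReal} (hS : S ∈ SS) :
    Isom (canonical (embedsInto S)) S := by
  obtain ⟨s, hs, hsS⟩ := exists_isom_of_mem_SS hS
  rwa [hsS.symm.embedsInto_eq, hs]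

/-! ### Projective column spaces -/

@[simp] lemma toE_bot : toE ⊥ = ⊥ := rfl

@[simp] lemma toE_coe (r : ℝ) : toE r = r := rfl

@[simp] lemma toE_zero : toE 0 = 0 := rfl

lemma coe_add_le_coe_iff (s t : ℝ) (a : Rb) : (s : Rb) + a ≤ t ↔ a ≤ ↑(t - s) := by
  induction a using WithBot.recBotCoe with
  | bot => simp
  | coe a =>
    rw [← WithBot.coe_add, WithBot.coe_le_coe, WithBot.coe_le_coe]
    constructor <;> intro <;> linarith

lemma ne_zeroVec_iff {v : Fin 2 → Rb} : v ≠ zeroVec ↔ v 0 ≠ ⊥ ∨ v 1 ≠ ⊥ := by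
  simp only [Ne, funext_iff, Fin.forall_fin_two, zeroVec, not_and_or]

lemma projPt_le_coe_iff {v : Fin 2 → Rb} (hv : v ≠ zeroVec) (t : ℝ) :
    projPt v ≤ t ↔ v 1 ≤ t + v 0 := by
  rw [ne_zeroVec_iff] at hv
  unfold projPt
  generalize v 0 = a, v 1 = b at hv
  induction a using WithBot.recBotCoe <;> induction b using WithBot.recBotCoe <;>
    simp_all [← WithBot.coe_add, ← EReal.coe_sub]

lemma coe_le_projPt_iff {v : Fin 2 → Rb} (hv : v ≠ zeroVec) (t : ℝ) :
    (t : EReal) ≤ projPt v ↔ (t : Rb) + v 0 ≤ v 1 := by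
  rw [ne_zeroVec_iff] at hv
  unfold projPt
  generalize v 0 = a, v 1 = b at hv
  induction a using WithBot.recBotCoe <;> induction b using WithBot.recBotCoe <;>
    simp_all [← WithBot.coe_add, ← EReal.coe_sub, le_sub_iff_add_le]

lemma exists_projPt_eq (z : EReal) : ∃ v, v ≠ zeroVec ∧ projPt v = z := by
  induction z using EReal.rec with
  | bot => exact ⟨![0, ⊥], by simp [ne_zeroVec_iff], by simp [projPt]⟩
  | top => exact ⟨![⊥, 0], by simp [ne_zeroVec_iff], by simp [projPt]⟩
  | coe r => exact ⟨![0, (r : Rb)], by simp [ne_zeroVec_iff], by simp [projPt]⟩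

lemma exists_eq_vadd_of_projPt_eq {u v : Fin 2 → Rb} (hu : u ≠ zeroVec) (hv : v ≠ zeroVec)
    (h : projPt u = projPt v) : ∃ c : ℝ, u = (c : Rb) +ᵥ v := by
  rw [ne_zeroVec_iff] at hu hv
  simp only [funext_iff, Fin.forall_fin_two, Pi.vadd_apply, vadd_eq_add]
  unfold projPt at h
  generalize u 0 = a, u 1 = b, v 0 = a', v 1 = b' at hu hv h
  induction a using WithBot.recBotCoe <;> induction b using WithBot.recBotCoe <;>
    induction a' using WithBot.recBotCoe <;> induction b' using WithBot.recBotCoe <;>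
    simp_all [← WithBot.coe_add, ← EReal.coe_sub]
  all_goals first
    | exact ⟨_, (sub_add_cancel _ _).symm⟩
    | exact ⟨_, (sub_add_cancel _ _).symm, by linarith⟩

def colVec {n : ℕ} (A : Fin n → Fin n → Rb) (j : Fin n) : Fin n → Rb := fun i => A i j

noncomputable def tMulVec {n : ℕ} (A : Fin n → Fin n → Rb) (v : Fin n → Rb) : Fin n → Rb :=
  fun i => Finset.univ.sup fun k => A i k + v k

lemma mem_colSpace_iff {n : ℕ} {A : Fin n → Fin n → Rb} {v : Fin n → Rb} :
    v ∈ ColSpace A ↔ ∃ c, tMulVec A c = v := by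
  simp only [ColSpace, tMulVec, funext_iff, add_comm, eq_comm, mem_ofPred_eq]

lemma tMulVec_sup {n : ℕ} (A : Fin n → Fin n → Rb) (c d : Fin n → Rb) :
    tMulVec A (c ⊔ d) = tMulVec A c ⊔ tMulVec A d := by
  funext i
  simp only [tMulVec, Pi.sup_apply, add_max, ← Finset.sup_sup]
  rfl

lemma sup_mem_colSpace {n : ℕ} {A : Fin n → Fin n → Rb} {u w : Fin n → Rb} (hu : u ∈ ColSpace A)
    (hw : w ∈ ColSpace A) : u ⊔ w ∈ ColSpace A := by
  obtain ⟨c, rfl⟩ := mem_colSpace_iff.1 hu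
  obtain ⟨d, rfl⟩ := mem_colSpace_iff.1 hw
  exact mem_colSpace_iff.2 ⟨c ⊔ d, tMulVec_sup A c d⟩

lemma sup_univ_fin_two {α : Type*} [SemilatticeSup α] [OrderBot α] (f : Fin 2 → α) :
    Finset.univ.sup f = f 0 ⊔ f 1 := by
  simp [Fin.univ_succ]

lemma tMulVec_apply (A : Mat2) (v : Fin 2 → Rb) (i : Fin 2) :
    tMulVec A v i = (A i 0 + v 0) ⊔ (A i 1 + v 1) :=
  sup_univ_fin_two _

lemma tMulVec_tMul (D A : Mat2) (c : Fin 2 → Rb) :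
    tMulVec (tMul D A) c = tMulVec D (tMulVec A c) := by
  funext i
  simp only [tMulVec_apply, tMul, sup_univ_fin_two, max_add, add_max, add_assoc]
  exact sup_sup_sup_comm _ _ _ _

lemma tMulVec_vadd (A : Mat2) (c : Rb) (v : Fin 2 → Rb) :
    tMulVec A (c +ᵥ v) = c +ᵥ tMulVec A v := by
  funext i
  simp only [tMulVec_apply, Pi.vadd_apply, vadd_eq_add, add_max, add_left_comm]

lemma vadd_mem_colSpace {A : Mat2} {v : Fin 2 → Rb} (c : Rb) (hv : v ∈ ColSpace A) :
    c +ᵥ v ∈ ColSpace A := by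
  obtain ⟨d, rfl⟩ := mem_colSpace_iff.1 hv
  exact mem_colSpace_iff.2 ⟨c +ᵥ d, tMulVec_vadd A c d⟩

lemma colVec_mem_colSpace (A : Mat2) (j : Fin 2) : colVec A j ∈ ColSpace A := by
  refine mem_colSpace_iff.2 ⟨fun k => if k = j then 0 else ⊥, funext fun i => ?_⟩
  fin_cases j <;> simp [tMulVec_apply, colVec]

lemma zeroVec_mem_colSpace (A : Mat2) : zeroVec ∈ ColSpace A :=
  mem_colSpace_iff.2 ⟨zeroVec, funext fun i => by simp [tMulVec_apply, zeroVec]⟩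

lemma mem_colSpace_of_projPt_mem {A : Mat2} {v : Fin 2 → Rb}
    (h : v ≠ zeroVec → projPt v ∈ PC A) : v ∈ ColSpace A := by
  by_cases hv : v = zeroVec
  · exact hv ▸ zeroVec_mem_colSpace A
  obtain ⟨w, hwA, hw, hwv⟩ := h hv
  obtain ⟨c, rfl⟩ := exists_eq_vadd_of_projPt_eq hv hw hwv.symm
  exact vadd_mem_colSpace _ hwA

def colPoints (A : Mat2) : Set EReal := {z | ∃ j, colVec A j ≠ zeroVec ∧ projPt (colVec A j) = z}

lemma projPt_colVec_mem_colPoints {A : Mat2} {j : Fin 2} (hj : colVec A j ≠ zeroVec) :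
    projPt (colVec A j) ∈ colPoints A :=
  ⟨j, hj, rfl⟩

lemma colPoints_subset_PC (A : Mat2) : colPoints A ⊆ PC A :=
  fun _ ⟨j, hj, hz⟩ => ⟨_, colVec_mem_colSpace A j, hj, hz⟩

lemma PC_subset_Icc (A : Mat2) : PC A ⊆ Icc (sInf (colPoints A)) (sSup (colPoints A)) := by
  rintro _ ⟨v, hvA, hv, rfl⟩
  obtain ⟨c, rfl⟩ := mem_colSpace_iff.1 hvA
  refine ⟨EReal.ge_of_forall_gt_iff_ge.1 fun t ht => (coe_le_projPt_iff hv t).2 ?_,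
    EReal.le_of_forall_lt_iff_le.1 fun t ht => (projPt_le_coe_iff hv t).2 ?_⟩
  · have hcol : ∀ j, (t : Rb) + A 0 j ≤ A 1 j := fun j => by
      by_cases hj : colVec A j = zeroVec
      · simp [show A 0 j = ⊥ from congrFun hj 0]
      · exact (coe_le_projPt_iff hj t).1 (ht.le.trans (sInf_le (projPt_colVec_mem_colPoints hj)))
    simp only [tMulVec_apply, add_max, ← add_assoc]
    exact sup_le_sup (add_le_add (hcol 0) le_rfl) (add_le_add (hcol 1) le_rfl)
  · have hcol : ∀ j, A 1 j ≤ t + A 0 j := fun j => by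
      by_cases hj : colVec A j = zeroVec
      · simp [show A 1 j = ⊥ from congrFun hj 1]
      · exact (projPt_le_coe_iff hj t).1 ((le_sSup (projPt_colVec_mem_colPoints hj)).trans ht.le)
    simp only [tMulVec_apply, add_max, ← add_assoc]
    exact sup_le_sup (add_le_add (hcol 0) le_rfl) (add_le_add (hcol 1) le_rfl)

/-- The point `r` strictly between `projPt u` and `projPt w` is attained by normalising `u` to
first coordinate `0` and `w` to second coordinate `r`: their maximum is `(0, r)`. -/
lemma ordConnected_PC (A : Mat2) : (PC A).OrdConnected := by
  refine ⟨fun _ hx _ hy z hz => ?_⟩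
  obtain ⟨u, huA, hu, rfl⟩ := hx
  obtain ⟨w, hwA, hw, rfl⟩ := hy
  rcases hz.1.eq_or_lt with rfl | hz₁
  · exact ⟨u, huA, hu, rfl⟩
  rcases hz.2.eq_or_lt with rfl | hz₂
  · exact ⟨w, hwA, hw, rfl⟩
  obtain ⟨r, rfl⟩ := exists_coe_of_mem_Ioo_bot_top ⟨bot_le.trans_lt hz₁, hz₂.trans_le le_top⟩
  have hu' := (projPt_le_coe_iff hu r).1 hz₁.le
  have hw' := (coe_le_projPt_iff hw r).1 hz₂.le
  obtain ⟨a, ha⟩ : ∃ a : ℝ, (a : Rb) = u 0 := WithBot.ne_bot_iff_exists.1 fun h => by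
    simp_all [ne_zeroVec_iff]
  obtain ⟨b, hb⟩ : ∃ b : ℝ, (b : Rb) = w 1 := WithBot.ne_bot_iff_exists.1 fun h => by
    simp_all [ne_zeroVec_iff]
  rw [← ha, ← WithBot.coe_add] at hu'
  rw [← hb, coe_add_le_coe_iff] at hw'
  set v := (((-a : ℝ) : Rb) +ᵥ u) ⊔ (((r - b : ℝ) : Rb) +ᵥ w)
  have hv0 : v 0 = (0 : ℝ) := by
    simp only [v, Pi.sup_apply, Pi.vadd_apply, vadd_eq_add, ← ha, ← WithBot.coe_add,
      neg_add_cancel]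
    refine sup_eq_left.2 ((coe_add_le_coe_iff _ _ _).2 (hw'.trans_eq ?_))
    congr 1; ring
  have hv1 : v 1 = r := by
    simp only [v, Pi.sup_apply, Pi.vadd_apply, vadd_eq_add, ← hb, ← WithBot.coe_add,
      sub_add_cancel]
    refine sup_eq_right.2 ((coe_add_le_coe_iff _ _ _).2 (hu'.trans_eq ?_))
    congr 1; ring
  refine ⟨v, sup_mem_colSpace (vadd_mem_colSpace _ huA) (vadd_mem_colSpace _ hwA),
    ne_zeroVec_iff.2 (Or.inl (by simp [hv0])), ?_⟩
  simp [projPt, hv0, hv1]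

theorem PC_eq_Icc (A : Mat2) : PC A = Icc (sInf (colPoints A)) (sSup (colPoints A)) := by
  refine (PC_subset_Icc A).antisymm fun z hz => ?_
  have hne : (colPoints A).Nonempty := nonempty_iff_ne_empty.2 fun h => by
    simp [h] at hz
  have hfin : (colPoints A).Finite :=
    (finite_range fun j => projPt (colVec A j)).subset fun _ ⟨j, _, hj⟩ => ⟨j, hj⟩
  exact (ordConnected_PC A).out (colPoints_subset_PC A (hne.csInf_mem hfin))
    (colPoints_subset_PC A (hne.csSup_mem hfin)) hz

lemma exists_PC_eq_Icc (p q : EReal) : ∃ X : Mat2, PC X = Icc p q := by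
  rcases le_or_gt p q with hpq | hqp
  · obtain ⟨u, hu, rfl⟩ := exists_projPt_eq p
    obtain ⟨w, hw, rfl⟩ := exists_projPt_eq q
    refine ⟨fun i => ![u i, w i], ?_⟩
    have : colPoints (fun i => ![u i, w i]) = {projPt u, projPt w} := by
      ext z
      have h0 : colVec (fun i => ![u i, w i]) 0 = u := rfl
      have h1 : colVec (fun i => ![u i, w i]) 1 = w := rfl
      simp only [colPoints, Fin.exists_fin_two, h0, h1, mem_insert_iff, mem_singleton_iff,
        mem_ofPred_eq, hu, hw, ne_eq, not_false_eq_true, true_and, eq_comm]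
    rw [PC_eq_Icc, this, sInf_pair, sSup_pair, inf_eq_left.2 hpq, sup_eq_right.2 hpq]
  · refine ⟨fun _ _ => ⊥, ?_⟩
    have : colPoints (fun _ _ => ⊥) = ∅ := eq_empty_of_forall_notMem fun _ ⟨_, hj, _⟩ => hj rfl
    rw [PC_eq_Icc, this, sInf_empty, sSup_empty, Icc_eq_empty (not_le.2 bot_lt_top),
      Icc_eq_empty (not_le.2 hqp)]

lemma projPt_add_coe (v : Fin 2 → Rb) (c : ℝ) : projPt ![v 0, v 1 + c] = projPt v + c := by
  unfold projPt
  simp only [Matrix.cons_val_zero, Matrix.cons_val_one]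
  generalize v 0 = a, v 1 = b
  induction a using WithBot.recBotCoe <;> induction b using WithBot.recBotCoe <;>
    simp [← WithBot.coe_add, ← EReal.coe_sub, -EReal.coe_add]
  rw [← EReal.coe_add, sub_add_eq_add_sub]

lemma projPt_swap_add_coe {v : Fin 2 → Rb} (hv : v ≠ zeroVec) (c : ℝ) :
    projPt ![v 1, v 0 + c] = -projPt v + c := by
  rw [ne_zeroVec_iff] at hv
  unfold projPt
  simp only [Matrix.cons_val_zero, Matrix.cons_val_one]
  generalize v 0 = a, v 1 = b at hv
  induction a using WithBot.recBotCoe <;> induction b using WithBot.recBotCoe <;>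
    simp_all [← WithBot.coe_add, ← EReal.coe_sub, -EReal.coe_add]
  rw [← EReal.coe_neg, ← EReal.coe_add]
  congr 1
  ring

/-! ### Ideals -/

lemma coe_neg_add_add_coe (x : Rb) (c : ℝ) : ((-c : ℝ) : Rb) + (x + c) = x := by
  rw [add_comm x, ← add_assoc, ← WithBot.coe_add, neg_add_cancel, WithBot.coe_zero, zero_add]

lemma exists_tMulVec_eq {w : Fin 2 → Rb} (hw : w ≠ zeroVec) (v : Fin 2 → Rb) :
    ∃ D : Mat2, tMulVec D w = v := by
  obtain ⟨k, hk⟩ : ∃ k, w k ≠ ⊥ := by simpa [ne_zeroVec_iff, Fin.exists_fin_two] using hw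
  obtain ⟨r, hr⟩ := WithBot.ne_bot_iff_exists.1 hk
  refine ⟨fun i m => if m = k then ((-r : ℝ) : Rb) + v i else ⊥, funext fun i => ?_⟩
  fin_cases k <;> simp only [Fin.zero_eta, Fin.mk_one] at hr <;>
    simp [tMulVec_apply, ← hr, add_assoc, coe_neg_add_add_coe]

def idealIntervals (I : Set Mat2) (p q : EReal) : Prop := ∀ X : Mat2, PC X = Icc p q → X ∈ I

namespace IsIdeal

variable {I : Set Mat2}

lemma mem_of_forall_colVec (hI : IsIdeal I) {A X : Mat2} (hA : A ∈ I) (D : Mat2)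
    (h : ∀ j, ∃ w ∈ ColSpace A, colVec X j = tMulVec D w) : X ∈ I := by
  choose w hwA hw using h
  choose c hc using fun j => mem_colSpace_iff.1 (hwA j)
  convert hI.2 A hA D (fun k j => c j k)
  funext i j
  show X i j = tMulVec (tMul D A) (c j) i
  rw [tMulVec_tMul, hc, ← hw]
  rfl

lemma mem_of_mapsTo (hI : IsIdeal I) {A X : Mat2} (hA : A ∈ I) {g : EReal → EReal}
    (hg : IsMotion g) (h : MapsTo g (PC X) (PC A)) : X ∈ I := by
  have hcol : ∀ j, colVec X j ≠ zeroVec → g (projPt (colVec X j)) ∈ PC A :=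
    fun j hj => h ⟨_, colVec_mem_colSpace X j, hj, rfl⟩
  obtain ⟨c, rfl | rfl⟩ := hg
  · refine hI.mem_of_forall_colVec hA ![![0, ⊥], ![⊥, ((-c : ℝ) : Rb)]] fun j =>
      ⟨![X 0 j, X 1 j + c], mem_colSpace_of_projPt_mem fun hw => ?_, ?_⟩
    · refine projPt_add_coe (colVec X j) c ▸ hcol j fun h0 => hw ?_
      simp [show X 0 j = ⊥ from congrFun h0 0, show X 1 j = ⊥ from congrFun h0 1, zeroVec,
        funext_iff, Fin.forall_fin_two]
    · funext i
      fin_cases i <;> simp [tMulVec_apply, colVec, coe_neg_add_add_coe]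
  · refine hI.mem_of_forall_colVec hA ![![⊥, ((-c : ℝ) : Rb)], ![0, ⊥]] fun j =>
      ⟨![X 1 j, X 0 j + c], mem_colSpace_of_projPt_mem fun hw => ?_, ?_⟩
    · have hj : colVec X j ≠ zeroVec := fun h0 => hw <| by
        simp [show X 0 j = ⊥ from congrFun h0 0, show X 1 j = ⊥ from congrFun h0 1, zeroVec,
          funext_iff, Fin.forall_fin_two]
      exact projPt_swap_add_coe hj c ▸ hcol j hj
    · funext i
      fin_cases i <;> simp [tMulVec_apply, colVec, coe_neg_add_add_coe]

lemma mem_of_PC_subset_singleton (hI : IsIdeal I) {A X : Mat2} (hA : A ∈ I)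
    (hA' : (PC A).Nonempty) {p : EReal} (h : PC X ⊆ {p}) : X ∈ I := by
  obtain ⟨_, w, hwA, hw, -⟩ := hA'
  obtain ⟨v, hv, rfl⟩ := exists_projPt_eq p
  obtain ⟨D, hD⟩ := exists_tMulVec_eq hw v
  refine hI.mem_of_forall_colVec hA D fun j => ?_
  by_cases hj : colVec X j = zeroVec
  · refine ⟨⊥ +ᵥ w, vadd_mem_colSpace ⊥ hwA, ?_⟩
    rw [tMulVec_vadd, hD, hj]
    funext i
    simp [zeroVec]
  · obtain ⟨c, hc⟩ := exists_eq_vadd_of_projPt_eq hj hv (h ⟨_, colVec_mem_colSpace X j, hj, rfl⟩)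
    exact ⟨(c : Rb) +ᵥ w, vadd_mem_colSpace _ hwA, by rw [tMulVec_vadd, hD, hc]⟩

lemma isIntervalDownset (hI : IsIdeal I) : IsIntervalDownset (idealIntervals I) where
  of_lt h X hX := by
    obtain ⟨A, hA⟩ := hI.1
    refine hI.mem_of_mapsTo hA isMotion_id ?_
    rw [hX, Icc_eq_empty (not_le.2 h)]
    exact mapsTo_empty _ _
  singleton {u v} p huv h X hX := by
    obtain ⟨A, hA⟩ := exists_PC_eq_Icc u v
    exact hI.mem_of_PC_subset_singleton (h A hA) (hA ▸ nonempty_Icc.2 huv)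
      (by rw [hX, Icc_self])
  of_mapsTo {p q u v} _ hg hmaps h X hX := by
    obtain ⟨A, hA⟩ := exists_PC_eq_Icc u v
    exact hI.mem_of_mapsTo (h A hA) hg (hX ▸ hA ▸ hmaps)

lemma mem_iff_idealIntervals (hI : IsIdeal I) {X : Mat2} {p q : EReal} (hX : PC X = Icc p q) :
    X ∈ I ↔ idealIntervals I p q :=
  ⟨fun h Y hY => hI.mem_of_mapsTo h isMotion_id (by rw [hX, hY]; exact mapsTo_id _),
    fun h => h X hX⟩

end IsIdeal

lemma idealIntervals_eq_embedsInto {I : Set Mat2} {S : Set EReal}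
    (h : ∀ X, X ∈ I ↔ IsomEmbed (PC X) S) : idealIntervals I = embedsInto S :=
  funext₂ fun p q => propext ⟨fun hI => by
    obtain ⟨X, hX⟩ := exists_PC_eq_Icc p q
    rw [embedsInto, ← hX]
    exact (h X).1 (hI X hX), fun hS X hX => (h X).2 (hX ▸ hS)⟩

/-- every ideal `I` of `M₂(ℝ̄)` is determined by a member `I'` of `𝕊`:
a matrix lies in `I` iff its projective column space embeds isometrically into `I'`;
moreover `I'` is unique up to isometry. -/
theorem ideal_determined_by_convex_set (I : Set Mat2) (hI : IsIdeal I) :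
    ∃ I' ∈ SS, (∀ X : Mat2, X ∈ I ↔ IsomEmbed (PC X) I') ∧
      ∀ I'' ∈ SS, (∀ X : Mat2, X ∈ I ↔ IsomEmbed (PC X) I'') → Isom I' I'' := by
  refine ⟨canonical (idealIntervals I), canonical_mem_SS _, fun X => ?_, fun I'' hI'' h => ?_⟩
  · rw [hI.mem_iff_idealIntervals (PC_eq_Icc X), PC_eq_Icc X]
    exact (congrFun₂ hI.isIntervalDownset.embedsInto_canonical _ _).symm.to_iff
  · rw [idealIntervals_eq_embedsInto h]
    exact isom_canonical_embedsInto hI''
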